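/- The update map commutes with the SE(3) action: define Φ_{p,q}(X) := X + V_{p,q}(X), where V_{p,q} is the kernelized drifting field. Then for every g = (R, t) ∈ SE(3) acting atom-wise on configurations, all p, q ∈ P(M), and every X ∈ M, Φ_{g♯p, g♯q}(g·X) = g · Φ_{p,q}(X). -/

import Mathlib

/-!
STATEMENT 7: The update map `Φ_{p,q}(X) := X + V_{p,q}(X)`, where `V_{p,q}` is
the kernelized drifting field, commutes with the SE(3) action: for every
`g = (R, t) ∈ SE(3)` acting atom-wise on configurations, all `p, q ∈ P(M)`,
and every `X ∈ M`, `Φ_{g♯p, g♯q}(g·X) = g · Φ_{p,q}(X)`.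
-/

open MeasureTheory Matrix

noncomputable section

/-- The molecular configuration space `M = ℝ^{3N}` for `N` atoms, with the
Euclidean norm (coordinates indexed by atom `n` and spatial axis `i`). -/
abbrev Conf (N : ℕ) := EuclideanSpace ℝ (Fin N × Fin 3)

/-- Membership in `P(M)`: Borel probability measures absolutely continuous with
respect to Lebesgue measure. -/
def IsProbAC {N : ℕ} (μ : Measure (Conf N)) : Prop :=
  IsProbabilityMeasure μ ∧ μ ≪ volume

/-- The exponential kernel `k(X,Y) = exp(−‖X−Y‖/τ)`. -/
def kern {N : ℕ} (τ : ℝ) (X Y : Conf N) : ℝ := Real.exp (-‖X - Y‖ / τ)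

/-- The partition function `Z_μ(X) = ∫ k(X,Y) dμ(Y)`. -/
def Zpart {N : ℕ} (τ : ℝ) (μ : Measure (Conf N)) (X : Conf N) : ℝ :=
  ∫ Y, kern τ X Y ∂μ

/-- The kernel-weighted mean-shift vector
`V_μ(X) = (1/Z_μ(X)) ∫ k(X,Y)(Y − X) dμ(Y)`. -/
def meanShift {N : ℕ} (τ : ℝ) (μ : Measure (Conf N)) (X : Conf N) : Conf N :=
  (Zpart τ μ X)⁻¹ • ∫ Y, kern τ X Y • (Y - X) ∂μ

/-- The kernelized drifting field `V_{p,q}(X) = V_p(X) − V_q(X)`. -/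
def drift {N : ℕ} (τ : ℝ) (p q : Measure (Conf N)) (X : Conf N) : Conf N :=
  meanShift τ p X - meanShift τ q X

/-- Atom-wise rigid motion: `(g·X)⁽ⁿ⁾ = R x⁽ⁿ⁾ + t` for `g = (R, t)`. -/
def act {N : ℕ} (R : Matrix (Fin 3) (Fin 3) ℝ) (t : Fin 3 → ℝ) (X : Conf N) : Conf N :=
  WithLp.toLp 2 (fun p : Fin N × Fin 3 => (∑ j, R p.2 j * X (p.1, j)) + t p.2)

/-- The update map `Φ_{p,q}(X) = X + V_{p,q}(X)`. -/
def updateMap {N : ℕ} (τ : ℝ) (p q : Measure (Conf N)) (X : Conf N) : Conf N :=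
  X + drift τ p q X

/-! For orthogonal `R` the atom-wise motion `X ↦ (1 ⊗ R) X + t` is an affine isometry `g` of `M`
whose linear part `L = 1 ⊗ R` is a linear isometry. The kernel only sees distances, so `Z` is
invariant and the mean-shift integrand at `g·X` is `L` applied to the one at `X`; integrals commute
with linear isometries (even for non-integrable integrands, where both sides are `0`), so
`V_{g♯μ}(g·X) = L V_μ(X)`, and finally `g (X + v) = g·X + L v`. -/

open scoped Kronecker

lemma AffineIsometryEquiv.integral_map {𝕜 V P E : Type*} [NormedField 𝕜] [SeminormedAddCommGroup V]
    [NormedSpace 𝕜 V] [PseudoMetricSpace P] [NormedAddTorsor V P] [MeasurableSpace P]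
    [BorelSpace P] [NormedAddCommGroup E] [NormedSpace ℝ E] (e : P ≃ᵃⁱ[𝕜] P) (μ : Measure P)
    (f : P → E) : ∫ y, f y ∂μ.map e = ∫ x, f (e x) ∂μ :=
  e.toHomeomorph.measurableEmbedding.integral_map f

section Equivariance

variable {N : ℕ} (τ : ℝ) (e : Conf N ≃ᵃⁱ[ℝ] Conf N)

lemma kern_map (X Y : Conf N) : kern τ (e X) (e Y) = kern τ X Y := by
  simp only [kern, ← dist_eq_norm, e.dist_map]

lemma Zpart_map (μ : Measure (Conf N)) (X : Conf N) :
    Zpart τ (μ.map e) (e X) = Zpart τ μ X := by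
  simp only [Zpart, AffineIsometryEquiv.integral_map, kern_map]

lemma meanShift_map (μ : Measure (Conf N)) (X : Conf N) :
    meanShift τ (μ.map e) (e X) = e.linearIsometryEquiv (meanShift τ μ X) := by
  have hintegrand : ∀ Y, kern τ (e X) (e Y) • (e Y - e X) =
      e.linearIsometryEquiv.toLinearIsometry (kern τ X Y • (Y - X)) := fun Y => by
    rw [kern_map, LinearIsometry.map_smul]
    exact congrArg _ (e.map_vsub Y X).symm
  simp only [meanShift, Zpart_map, AffineIsometryEquiv.integral_map, hintegrand,
    LinearIsometry.integral_comp_comm, LinearIsometryEquiv.map_smul]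
  rfl

lemma drift_map (p q : Measure (Conf N)) (X : Conf N) :
    drift τ (p.map e) (q.map e) (e X) = e.linearIsometryEquiv (drift τ p q X) := by
  simp only [drift, meanShift_map, map_sub]

lemma updateMap_map (p q : Measure (Conf N)) (X : Conf N) :
    updateMap τ (p.map e) (q.map e) (e X) = e (updateMap τ p q X) := by
  rw [updateMap, updateMap, drift_map, add_comm, ← vadd_eq_add, ← e.map_vadd, vadd_eq_add,
    add_comm]

end Equivariance

def rigidMotion (N : ℕ) {R : Matrix (Fin 3) (Fin 3) ℝ} (hR : R ∈ orthogonalGroup (Fin 3) ℝ)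
    (t : Fin 3 → ℝ) : Conf N ≃ᵃⁱ[ℝ] Conf N :=
  (Unitary.linearIsometryEquiv ⟨toEuclideanCLM (𝕜 := ℝ) ((1 : Matrix (Fin N) (Fin N) ℝ) ⊗ₖ R),
    Unitary.map_mem _ (kronecker_mem_unitary (one_mem _) hR)⟩).toAffineIsometryEquiv.trans
    (AffineIsometryEquiv.constVAdd ℝ (Conf N) (WithLp.toLp 2 fun p => t p.2))

lemma coe_rigidMotion (N : ℕ) {R : Matrix (Fin 3) (Fin 3) ℝ}
    (hR : R ∈ orthogonalGroup (Fin 3) ℝ) (t : Fin 3 → ℝ) :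
    ⇑(rigidMotion N hR t) = act R t := by
  ext X p
  change t p.2 + toEuclideanCLM (𝕜 := ℝ) ((1 : Matrix (Fin N) (Fin N) ℝ) ⊗ₖ R) X p = _
  simp [act, mulVec, dotProduct, Fintype.sum_prod_type, one_apply, add_comm]

theorem updateMap_SE3_commutes_general {N : ℕ} (τ : ℝ)
    (R : Matrix (Fin 3) (Fin 3) ℝ)
    (hR : R ∈ Matrix.orthogonalGroup (Fin 3) ℝ)
    (t : Fin 3 → ℝ) (p q : Measure (Conf N))
    (X : Conf N) :
    updateMap τ (p.map (act R t)) (q.map (act R t)) (act R t X)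
      = act R t (updateMap τ p q X) := by
  rw [← coe_rigidMotion N hR t]
  exact updateMap_map τ _ p q X

/-- The update map commutes with the SE(3) action. -/
theorem updateMap_SE3_commutes {N : ℕ} (τ : ℝ) (hτ : 0 < τ)
    (R : Matrix (Fin 3) (Fin 3) ℝ)
    (hR : R ∈ Matrix.orthogonalGroup (Fin 3) ℝ) (hdet : R.det = 1)
    (t : Fin 3 → ℝ) (p q : Measure (Conf N)) (hp : IsProbAC p) (hq : IsProbAC q)
    (X : Conf N) :
    updateMap τ (p.map (act R t)) (q.map (act R t)) (act R t X)
      = act R t (updateMap τ p q X) :=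
  updateMap_SE3_commutes_general τ R hR t p q X

end
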